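/- arXiv:2310.20358 — 2 statements merged into one kernel-verified Lean document; each statement's English description precedes it below -/
import Mathlib

section
/- (Verification direction of Theorem 1, conclusion (iii).) Let n ≥ 1, c ∈ ℂⁿ, let L₁(z) = Σⱼ a₁ⱼ zⱼ and L₂(z) = Σⱼ a₂ⱼ zⱼ with a₁ⱼ, a₂ⱼ ∈ ℂ, let Φ, χ : ℂⁿ → ℂ be c-periodic polynomial functions, and let B₁, B₂, B₃, B₄ ∈ ℂ satisfy one of the following four sets of relations: (a) e^{L₁(c)} = 1, e^{L₂(c)} = 1, e^{B₁−B₂} = −i, e^{B₃−B₄} = i; (b) e^{L₁(c)} = 1, e^{L₂(c)} = −1, e^{B₁−B₂} = −i, e^{B₃−B₄} = −i; (c) e^{L₁(c)} = −1, e^{L₂(c)} = 1, e^{B₁−B₂} = i, e^{B₃−B₄} = i; (d) e^{L₁(c)} = −1, e^{L₂(c)} = −1, e^{B₁−B₂} = i, e^{B₃−B₄} = −i. Define f₁(z) = (1/2)(e^{L₁(z)+Φ(z)+B₁} + e^{L₂(z)+χ(z)+B₃}) and f₂(z) = (1/2)(e^{L₁(z)+Φ(z)+B₂} + e^{L₂(z)+χ(z)+B₄}).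 Then for all z ∈ ℂⁿ: f₁(z)² + f₂(z + c)² = e^{L₁(z)+L₂(z)+Φ(z)+χ(z)+B₁+B₃} and f₂(z)² + f₁(z + c)² = e^{L₁(z)+L₂(z)+Φ(z)+χ(z)+B₂+B₄}. -/
/-!
Write `α = e^{L₁ + Φ}`, `β = e^{L₂ + χ}`, `bᵢ = e^{Bᵢ}`, `p = e^{L₁(c)}`, `q = e^{L₂(c)}`. Periodicity of
`Φ, χ` and linearity of `L₁, L₂` give `α(z + c) = p α(z)` and `β(z + c) = q β(z)`, so both equations
become the ring identity `(α b₁ + β b₃)² + (p α b₂ + q β b₄)² = 4 α β b₁ b₃`. In each of the four cases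
`p² = q² = 1`, `(b₁/b₂)² = (b₃/b₄)² = -1` and `(b₁/b₂)(b₃/b₄) = p q`, which is exactly what the identity
needs: the squares cancel and the cross term doubles.
-/

open Complex

theorem map_add_of_eq_sum_mul {ι R : Type*} [Fintype ι] [NonUnitalNonAssocSemiring R]
    {a : ι → R} {L : (ι → R) → R} (hL : ∀ z, L z = ∑ j, a j * z j) (z w : ι → R) :
    L (z + w) = L z + L w := by
  simp only [hL, Pi.add_apply, mul_add, Finset.sum_add_distrib]

section FermatIdentity

variable {R : Type*} [CommRing R] {p q b₁ b₂ b₃ b₄ : R}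

theorem fermat_pair_identity (hp : p ^ 2 = 1) (hq : q ^ 2 = 1) (h₁₂ : b₁ ^ 2 + b₂ ^ 2 = 0)
    (h₃₄ : b₃ ^ 2 + b₄ ^ 2 = 0) (hcross : b₁ * b₃ = p * q * (b₂ * b₄)) (α β : R) :
    (α * b₁ + β * b₃) ^ 2 + (p * α * b₂ + q * β * b₄) ^ 2 = 4 * (α * β * (b₁ * b₃)) := by
  linear_combination α ^ 2 * h₁₂ + α ^ 2 * b₂ ^ 2 * hp + β ^ 2 * h₃₄ + β ^ 2 * b₄ ^ 2 * hq
    - 2 * α * β * hcross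

theorem mul_eq_mul_mul_swap_of_sq_eq_one (hp : p ^ 2 = 1) (hq : q ^ 2 = 1) (hcross : b₁ * b₃ = p * q * (b₂ * b₄)) :
    b₂ * b₄ = p * q * (b₁ * b₃) := by
  linear_combination (-(p * q)) * hcross - q ^ 2 * b₂ * b₄ * hp - b₂ * b₄ * hq

end FermatIdentity

theorem exp_sq_add_exp_sq_eq_zero {B B' : ℂ} (h : exp (B - B') ^ 2 = -1) :
    exp B ^ 2 + exp B' ^ 2 = 0 := by
  rw [← sub_add_cancel B B', exp_add, mul_pow, h]
  ring

theorem exp_mul_exp_eq_of_exp_sub {B₁ B₂ B₃ B₄ r : ℂ}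
    (h : exp (B₁ - B₂) * exp (B₃ - B₄) = r) : exp B₁ * exp B₃ = r * (exp B₂ * exp B₄) := by
  rw [← h, ← exp_add, ← exp_add, ← exp_add, ← exp_add]
  congr 1
  ring

theorem exp_fermat_system {V : Type*} [Add V] {c : V} {g₁ g₂ : V → ℂ} {s₁ s₂ B₁ B₂ B₃ B₄ : ℂ}
    (hg₁ : ∀ z, g₁ (z + c) = g₁ z + s₁) (hg₂ : ∀ z, g₂ (z + c) = g₂ z + s₂)
    (hs₁ : exp s₁ ^ 2 = 1) (hs₂ : exp s₂ ^ 2 = 1)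
    (h₁₂ : exp (B₁ - B₂) ^ 2 = -1) (h₃₄ : exp (B₃ - B₄) ^ 2 = -1)
    (hcross : exp (B₁ - B₂) * exp (B₃ - B₄) = exp s₁ * exp s₂) (z : V) :
    (1 / 2 * (exp (g₁ z + B₁) + exp (g₂ z + B₃))) ^ 2
        + (1 / 2 * (exp (g₁ (z + c) + B₂) + exp (g₂ (z + c) + B₄))) ^ 2
        = exp (g₁ z + g₂ z + B₁ + B₃) ∧
      (1 / 2 * (exp (g₁ z + B₂) + exp (g₂ z + B₄))) ^ 2
        + (1 / 2 * (exp (g₁ (z + c) + B₁) + exp (g₂ (z + c) + B₃))) ^ 2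
        = exp (g₁ z + g₂ z + B₂ + B₄) := by
  have hb₁₂ := exp_sq_add_exp_sq_eq_zero h₁₂
  have hb₃₄ := exp_sq_add_exp_sq_eq_zero h₃₄
  have hb := exp_mul_exp_eq_of_exp_sub hcross
  have key := fermat_pair_identity hs₁ hs₂ hb₁₂ hb₃₄ hb (exp (g₁ z)) (exp (g₂ z))
  have key' := fermat_pair_identity hs₁ hs₂ ((add_comm _ _).trans hb₁₂)
    ((add_comm _ _).trans hb₃₄) (mul_eq_mul_mul_swap_of_sq_eq_one hs₁ hs₂ hb) (exp (g₁ z)) (exp (g₂ z))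
  simp only [hg₁, hg₂, exp_add]
  constructor
  · linear_combination key / 4
  · linear_combination key' / 4

theorem exp_conditions_of_cases {u v ε δ : ℂ}
    (h : (u = 1 ∧ v = 1 ∧ ε = -I ∧ δ = I) ∨ (u = 1 ∧ v = -1 ∧ ε = -I ∧ δ = -I) ∨
      (u = -1 ∧ v = 1 ∧ ε = I ∧ δ = I) ∨ (u = -1 ∧ v = -1 ∧ ε = I ∧ δ = -I)) :
    u ^ 2 = 1 ∧ v ^ 2 = 1 ∧ ε ^ 2 = -1 ∧ δ ^ 2 = -1 ∧ ε * δ = u * v := by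
  rcases h with ⟨rfl, rfl, rfl, rfl⟩ | ⟨rfl, rfl, rfl, rfl⟩ | ⟨rfl, rfl, rfl, rfl⟩ |
    ⟨rfl, rfl, rfl, rfl⟩ <;> simp

theorem stmt_9_general (n : ℕ) (c : Fin n → ℂ)
    (a₁ a₂ : Fin n → ℂ) (L₁ L₂ : (Fin n → ℂ) → ℂ)
    (hL₁ : ∀ z, L₁ z = ∑ j, a₁ j * z j) (hL₂ : ∀ z, L₂ z = ∑ j, a₂ j * z j)
    (Φ χ : (Fin n → ℂ) → ℂ)
    (hΦper : ∀ z, Φ (z + c) = Φ z) (hχper : ∀ z, χ (z + c) = χ z)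
    (B₁ B₂ B₃ B₄ : ℂ)
    (hcases :
      (Complex.exp (L₁ c) = 1 ∧ Complex.exp (L₂ c) = 1 ∧
        Complex.exp (B₁ - B₂) = -I ∧ Complex.exp (B₃ - B₄) = I) ∨
      (Complex.exp (L₁ c) = 1 ∧ Complex.exp (L₂ c) = -1 ∧
        Complex.exp (B₁ - B₂) = -I ∧ Complex.exp (B₃ - B₄) = -I) ∨
      (Complex.exp (L₁ c) = -1 ∧ Complex.exp (L₂ c) = 1 ∧
        Complex.exp (B₁ - B₂) = I ∧ Complex.exp (B₃ - B₄) = I) ∨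
      (Complex.exp (L₁ c) = -1 ∧ Complex.exp (L₂ c) = -1 ∧
        Complex.exp (B₁ - B₂) = I ∧ Complex.exp (B₃ - B₄) = -I))
    (f₁ f₂ : (Fin n → ℂ) → ℂ)
    (hf₁ : ∀ z, f₁ z = (1 / 2) *
      (Complex.exp (L₁ z + Φ z + B₁) + Complex.exp (L₂ z + χ z + B₃)))
    (hf₂ : ∀ z, f₂ z = (1 / 2) *
      (Complex.exp (L₁ z + Φ z + B₂) + Complex.exp (L₂ z + χ z + B₄))) :
    ∀ z, f₁ z ^ 2 + f₂ (z + c) ^ 2 =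
            Complex.exp (L₁ z + L₂ z + Φ z + χ z + B₁ + B₃) ∧
         f₂ z ^ 2 + f₁ (z + c) ^ 2 =
            Complex.exp (L₁ z + L₂ z + Φ z + χ z + B₂ + B₄) := by
  intro z
  obtain ⟨hp, hq, hε, hδ, hεδ⟩ := exp_conditions_of_cases hcases
  obtain ⟨h₁, h₂⟩ := exp_fermat_system (c := c) (g₁ := fun z ↦ L₁ z + Φ z)
    (g₂ := fun z ↦ L₂ z + χ z)
    (fun z ↦ by simp only [map_add_of_eq_sum_mul hL₁, hΦper]; ring)
    (fun z ↦ by simp only [map_add_of_eq_sum_mul hL₂, hχper]; ring) hp hq hε hδ hεδ z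
  simp only [hf₁, hf₂]
  exact ⟨h₁.trans (by ring_nf), h₂.trans (by ring_nf)⟩

/-- Verification direction of Theorem 1, conclusion (iii). -/
theorem stmt_9 (n : ℕ) (hn : 1 ≤ n) (c : Fin n → ℂ)
    (a₁ a₂ : Fin n → ℂ) (L₁ L₂ : (Fin n → ℂ) → ℂ)
    (hL₁ : ∀ z, L₁ z = ∑ j, a₁ j * z j) (hL₂ : ∀ z, L₂ z = ∑ j, a₂ j * z j)
    (Φ χ : (Fin n → ℂ) → ℂ)
    (hΦpoly : ∃ p : MvPolynomial (Fin n) ℂ, ∀ z, Φ z = MvPolynomial.eval z p)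
    (hχpoly : ∃ p : MvPolynomial (Fin n) ℂ, ∀ z, χ z = MvPolynomial.eval z p)
    (hΦper : ∀ z, Φ (z + c) = Φ z) (hχper : ∀ z, χ (z + c) = χ z)
    (B₁ B₂ B₃ B₄ : ℂ)
    (hcases :
      (Complex.exp (L₁ c) = 1 ∧ Complex.exp (L₂ c) = 1 ∧
        Complex.exp (B₁ - B₂) = -I ∧ Complex.exp (B₃ - B₄) = I) ∨
      (Complex.exp (L₁ c) = 1 ∧ Complex.exp (L₂ c) = -1 ∧
        Complex.exp (B₁ - B₂) = -I ∧ Complex.exp (B₃ - B₄) = -I) ∨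
      (Complex.exp (L₁ c) = -1 ∧ Complex.exp (L₂ c) = 1 ∧
        Complex.exp (B₁ - B₂) = I ∧ Complex.exp (B₃ - B₄) = I) ∨
      (Complex.exp (L₁ c) = -1 ∧ Complex.exp (L₂ c) = -1 ∧
        Complex.exp (B₁ - B₂) = I ∧ Complex.exp (B₃ - B₄) = -I))
    (f₁ f₂ : (Fin n → ℂ) → ℂ)
    (hf₁ : ∀ z, f₁ z = (1 / 2) *
      (Complex.exp (L₁ z + Φ z + B₁) + Complex.exp (L₂ z + χ z + B₃)))
    (hf₂ : ∀ z, f₂ z = (1 / 2) *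
      (Complex.exp (L₁ z + Φ z + B₂) + Complex.exp (L₂ z + χ z + B₄))) :
    ∀ z, f₁ z ^ 2 + f₂ (z + c) ^ 2 =
            Complex.exp (L₁ z + L₂ z + Φ z + χ z + B₁ + B₃) ∧
         f₂ z ^ 2 + f₁ (z + c) ^ 2 =
            Complex.exp (L₁ z + L₂ z + Φ z + χ z + B₂ + B₄) :=
  stmt_9_general n c a₁ a₂ L₁ L₂ hL₁ hL₂ Φ χ hΦper hχper B₁ B₂ B₃ B₄ hcases f₁ f₂ hf₁ hf₂
end

section
/- (Verification direction of Theorem 2, conclusion (i).) Let c = (c₁, c₂) ∈ ℂ², k a positive integer, ξ₁, ξ₂ ∈ ℂ with ξⱼ ≠ 0 and ξⱼ⁴ ≠ 1 for j = 1, 2, a₁, a₂ ∈ ℂ with L(z) := a₁z₁ + a₂z₂, H : ℂ → ℂ a one-variable polynomial function with H(z₂ + c₂) = H(z₂) for all z₂, and B₁, B₂ ∈ ℂ satisfying exp(L(c)) = −(a₁/2)^{2k}·(ξ₁² − 1)(ξ₂² − 1)/((ξ₁² + 1)(ξ₂² + 1)) and exp(B₁ − B₂) = ξ₁²(ξ₂⁴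 − 1)/(ξ₂²(ξ₁⁴ − 1)). Define f₁(z₁, z₂) = ((ξ₂² − 1)/(2iξ₂))·exp((L(z) + H(z₂) + B₂ − L(c))/2) and f₂(z₁, z₂) = ((ξ₁² − 1)/(2iξ₁))·exp((L(z) + H(z₂) + B₁ − L(c))/2). Then for all z ∈ ℂ²: (∂ᵏf₁/∂z₁ᵏ)(z)² + f₂(z + c)² = exp(L(z) + H(z₂) + B₁) and (∂ᵏf₂/∂z₁ᵏ)(z)² + f₁(z + c)² = exp(L(z) + H(z₂) + B₂). -/
/-!
Both unknowns are exponentials of `(L + H + const) / 2`. Differentiating `k` times in `z₁`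
multiplies such a function by `(a₁ / 2) ^ k`, and the shift by `c` multiplies it by
`exp (L c / 2)` because `L` is linear and `H` is `c₂`-periodic. Each equation of the system
therefore collapses to an identity between constants,
`α² (a₁ / 2) ^ (2k) = (1 - β²) e^{B' - B} e^{L c}`, where `α, β` are the prefactors
`s(ξ) = (ξ² - 1) / (2iξ)`. Since `1 - s(ξ)² = ((ξ² + 1) / (2ξ))²`, this identity is exactly what
the two constraints on `e^{L c}` and `e^{B₁ - B₂}` say, and the second equation is the first one
with `ξ₁, ξ₂` exchanged.
-/

open Complex

lemma sq_sub_one_ne_zero_and_sq_add_one_ne_zero {x : ℂ} (hx : x ^ 4 ≠ 1) :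
    x ^ 2 - 1 ≠ 0 ∧ x ^ 2 + 1 ≠ 0 :=
  mul_ne_zero_iff.mp <| by
    rw [show (x ^ 2 - 1) * (x ^ 2 + 1) = x ^ 4 - 1 by ring]
    exact sub_ne_zero.mpr hx

lemma fermat_coeff_identity {ξ η P u v : ℂ} (hξ : ξ ≠ 0) (hξm : ξ ^ 2 - 1 ≠ 0)
    (hξp : ξ ^ 2 + 1 ≠ 0) (hηp : η ^ 2 + 1 ≠ 0)
    (hv : v = -P * ((ξ ^ 2 - 1) * (η ^ 2 - 1)) / ((ξ ^ 2 + 1) * (η ^ 2 + 1)))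
    (hu : u = ξ ^ 2 * (η ^ 4 - 1) / (η ^ 2 * (ξ ^ 4 - 1))) :
    ((η ^ 2 - 1) / (2 * I * η)) ^ 2 * P = (1 - ((ξ ^ 2 - 1) / (2 * I * ξ)) ^ 2) * u * v := by
  have hfac : ∀ x : ℂ, x ^ 4 - 1 = (x ^ 2 - 1) * (x ^ 2 + 1) := fun x => by ring
  subst hu hv
  rw [hfac, hfac]
  simp only [div_pow, mul_pow, I_sq]
  field_simp
  ring

section

variable {a₁ a₂ : ℂ} {L : ℂ × ℂ → ℂ}

lemma iteratedDeriv_fst_mul_cexp_half (hL : ∀ z : ℂ × ℂ, L z = a₁ * z.1 + a₂ * z.2)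
    {G : ℂ → ℂ} {α : ℂ} {f : ℂ × ℂ → ℂ} (hf : ∀ z, f z = α * exp ((L z + G z.2) / 2))
    (k : ℕ) (z : ℂ × ℂ) :
    iteratedDeriv k (fun t => f (t, z.2)) z.1 = (a₁ / 2) ^ k * f z := by
  have hslice : (fun t => f (t, z.2)) =
      fun t => α * exp ((a₂ * z.2 + G z.2) / 2) * exp (a₁ / 2 * t) := by
    funext t
    rw [hf, hL, mul_assoc, ← exp_add]
    ring_nf
  rw [hslice, iteratedDeriv_const_mul_field, iteratedDeriv_cexp_const_mul, hf, hL,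
    mul_left_comm, mul_assoc, ← exp_add]
  ring_nf

lemma sq_iteratedDeriv_add_sq_comp_add_eq_cexp {c : ℂ × ℂ} {H : ℂ → ℂ} {k : ℕ}
    (hL : ∀ z : ℂ × ℂ, L z = a₁ * z.1 + a₂ * z.2) (hHper : ∀ t : ℂ, H (t + c.2) = H t)
    {α β B B' : ℂ} {f g : ℂ × ℂ → ℂ}
    (hf : ∀ z, f z = α * exp ((L z + H z.2 + B - L c) / 2))
    (hg : ∀ z, g z = β * exp ((L z + H z.2 + B' - L c) / 2))
    (hcoeff : α ^ 2 * (a₁ / 2) ^ (2 * k) = (1 - β ^ 2) * exp (B' - B) * exp (L c))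
    (z : ℂ × ℂ) :
    iteratedDeriv k (fun t => f (t, z.2)) z.1 ^ 2 + g (z + c) ^ 2 =
      exp (L z + H z.2 + B') := by
  have hLadd : L (z + c) = L z + L c := by
    simp only [hL, Prod.fst_add, Prod.snd_add]; ring
  have hexp_sq : ∀ w, exp (w / 2) ^ 2 = exp w := fun w => by
    rw [← exp_nat_mul]; ring_nf
  have hsplit : exp (L z + H z.2 + B') =
      exp (B' - B) * exp (L c) * exp (L z + H z.2 + B - L c) := by
    rw [← exp_add, ← exp_add]; ring_nf
  have hf' : ∀ z, f z = α * exp ((L z + (H z.2 + (B - L c))) / 2) := fun z => by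
    rw [hf, add_sub_assoc, add_assoc]
  rw [iteratedDeriv_fst_mul_cexp_half hL (G := fun w => H w + (B - L c)) hf' k z, hf z,
    hg (z + c), Prod.snd_add, hHper, hLadd,
    show L z + L c + H z.2 + B' - L c = L z + H z.2 + B' by ring]
  simp only [mul_pow, hexp_sq]
  rw [hsplit]
  linear_combination exp (L z + H z.2 + B - L c) * hcoeff

end

theorem stmt_10_general (c : ℂ × ℂ) (k : ℕ) (ξ₁ ξ₂ : ℂ)
    (hξ₁0 : ξ₁ ≠ 0) (hξ₂0 : ξ₂ ≠ 0) (hξ₁4 : ξ₁ ^ 4 ≠ 1) (hξ₂4 : ξ₂ ^ 4 ≠ 1)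
    (a₁ a₂ : ℂ) (L : ℂ × ℂ → ℂ) (hL : ∀ z : ℂ × ℂ, L z = a₁ * z.1 + a₂ * z.2)
    (H : ℂ → ℂ)
    (hHper : ∀ t : ℂ, H (t + c.2) = H t)
    (B₁ B₂ : ℂ)
    (hLc : Complex.exp (L c) = -(a₁ / 2) ^ (2 * k) *
      ((ξ₁ ^ 2 - 1) * (ξ₂ ^ 2 - 1)) / ((ξ₁ ^ 2 + 1) * (ξ₂ ^ 2 + 1)))
    (hB : Complex.exp (B₁ - B₂) = ξ₁ ^ 2 * (ξ₂ ^ 4 - 1) / (ξ₂ ^ 2 * (ξ₁ ^ 4 - 1)))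
    (f₁ f₂ : ℂ × ℂ → ℂ)
    (hf₁ : ∀ z : ℂ × ℂ, f₁ z = ((ξ₂ ^ 2 - 1) / (2 * I * ξ₂)) *
      Complex.exp ((L z + H z.2 + B₂ - L c) / 2))
    (hf₂ : ∀ z : ℂ × ℂ, f₂ z = ((ξ₁ ^ 2 - 1) / (2 * I * ξ₁)) *
      Complex.exp ((L z + H z.2 + B₁ - L c) / 2)) :
    ∀ z : ℂ × ℂ,
      (iteratedDeriv k (fun t => f₁ (t, z.2)) z.1) ^ 2 + f₂ (z + c) ^ 2 =
        Complex.exp (L z + H z.2 + B₁) ∧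
      (iteratedDeriv k (fun t => f₂ (t, z.2)) z.1) ^ 2 + f₁ (z + c) ^ 2 =
        Complex.exp (L z + H z.2 + B₂) := by
  have hLc' : exp (L c) = -(a₁ / 2) ^ (2 * k) *
      ((ξ₂ ^ 2 - 1) * (ξ₁ ^ 2 - 1)) / ((ξ₂ ^ 2 + 1) * (ξ₁ ^ 2 + 1)) := by
    rw [hLc, mul_comm (ξ₂ ^ 2 - 1), mul_comm (ξ₂ ^ 2 + 1)]
  have hB' : exp (B₂ - B₁) = ξ₂ ^ 2 * (ξ₁ ^ 4 - 1) / (ξ₁ ^ 2 * (ξ₂ ^ 4 - 1)) := by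
    rw [← neg_sub, exp_neg, hB, inv_div]
  obtain ⟨hξ₁m, hξ₁p⟩ := sq_sub_one_ne_zero_and_sq_add_one_ne_zero hξ₁4
  obtain ⟨hξ₂m, hξ₂p⟩ := sq_sub_one_ne_zero_and_sq_add_one_ne_zero hξ₂4
  exact fun z =>
    ⟨sq_iteratedDeriv_add_sq_comp_add_eq_cexp hL hHper hf₁ hf₂
      (fermat_coeff_identity hξ₁0 hξ₁m hξ₁p hξ₂p hLc hB) z,
    sq_iteratedDeriv_add_sq_comp_add_eq_cexp hL hHper hf₂ hf₁
      (fermat_coeff_identity hξ₂0 hξ₂m hξ₂p hξ₁p hLc' hB') z⟩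

/-- Verification direction of Theorem 2, conclusion (i). -/
theorem stmt_10 (c : ℂ × ℂ) (k : ℕ) (hk : 0 < k) (ξ₁ ξ₂ : ℂ)
    (hξ₁0 : ξ₁ ≠ 0) (hξ₂0 : ξ₂ ≠ 0) (hξ₁4 : ξ₁ ^ 4 ≠ 1) (hξ₂4 : ξ₂ ^ 4 ≠ 1)
    (a₁ a₂ : ℂ) (L : ℂ × ℂ → ℂ) (hL : ∀ z : ℂ × ℂ, L z = a₁ * z.1 + a₂ * z.2)
    (H : ℂ → ℂ) (hHpoly : ∃ h : Polynomial ℂ, ∀ t, H t = Polynomial.eval t h)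
    (hHper : ∀ t : ℂ, H (t + c.2) = H t)
    (B₁ B₂ : ℂ)
    (hLc : Complex.exp (L c) = -(a₁ / 2) ^ (2 * k) *
      ((ξ₁ ^ 2 - 1) * (ξ₂ ^ 2 - 1)) / ((ξ₁ ^ 2 + 1) * (ξ₂ ^ 2 + 1)))
    (hB : Complex.exp (B₁ - B₂) = ξ₁ ^ 2 * (ξ₂ ^ 4 - 1) / (ξ₂ ^ 2 * (ξ₁ ^ 4 - 1)))
    (f₁ f₂ : ℂ × ℂ → ℂ)
    (hf₁ : ∀ z : ℂ × ℂ, f₁ z = ((ξ₂ ^ 2 - 1) / (2 * I * ξ₂)) *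
      Complex.exp ((L z + H z.2 + B₂ - L c) / 2))
    (hf₂ : ∀ z : ℂ × ℂ, f₂ z = ((ξ₁ ^ 2 - 1) / (2 * I * ξ₁)) *
      Complex.exp ((L z + H z.2 + B₁ - L c) / 2)) :
    ∀ z : ℂ × ℂ,
      (iteratedDeriv k (fun t => f₁ (t, z.2)) z.1) ^ 2 + f₂ (z + c) ^ 2 =
        Complex.exp (L z + H z.2 + B₁) ∧
      (iteratedDeriv k (fun t => f₂ (t, z.2)) z.1) ^ 2 + f₁ (z + c) ^ 2 =
        Complex.exp (L z + H z.2 + B₂) :=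
  stmt_10_general c k ξ₁ ξ₂ hξ₁0 hξ₂0 hξ₁4 hξ₂4 a₁ a₂ L hL H hHper B₁ B₂ hLc hB f₁ f₂ hf₁ hf₂
end
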